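/- arXiv:2206.07161 — 4 statements merged into one kernel-verified Lean document; each statement's English description precedes it below -/
import Mathlib

section
/- Let F: R^D → R be L_F-smooth and bounded below. Suppose the update is w^{t+1} = w^t − η · m^t / (√(v^t) + ε_0), where m^t, v^t ∈ R^D (componentwise division and square root), and there exist constants c_l, c_u > 0 such that c_l ≤ 1/(√(v^t_j) + ε_0) ≤ c_u for every coordinate j. Then for any step size η ≤ c_l / (2 c_u^2 L_F), one has F(w^{t+1}) ≤ F(w^t) + (η c_u / 2)·‖∇F(w^t) − m^t‖² − (η c_l / 2)·‖∇F(w^t)‖² − (η c_l / 4)·‖m^t‖². -/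
/-!
Since `∇F` is `L_F`-Lipschitz, `F` lies below its quadratic model:
`F w' ≤ F w + ⟪∇F w, d⟫ + L_F/2 ‖d‖²` with `d = w' - w` (apply the mean value theorem to the gap
between `F` and the model along the segment). Coordinatewise `d_j = -η a_j m_j` with
`a_j ∈ [c_l, c_u]`, and polarization `-g m = ((g - m)² - g² - m²)/2` turns the first-order term into
the three squares of the claim. The step-size bound `η ≤ c_l / (2 c_u² L_F)` makes the curvature
term `L_F/2 η² a_j² m_j²` at most `η c_l/4 m_j²`, which absorbs it into the `‖m‖²` term.
-/

open scoped RealInnerProductSpace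

theorem le_add_inner_gradient_add_norm_sq {E : Type*} [NormedAddCommGroup E]
    [InnerProductSpace ℝ E] [CompleteSpace E] {F : E → ℝ} {L : ℝ} (hF : Differentiable ℝ F)
    (hL : ∀ x y, ‖gradient F x - gradient F y‖ ≤ L * ‖x - y‖) (x y : E) :
    F y ≤ F x + ⟪gradient F x, y - x⟫ + L / 2 * ‖y - x‖ ^ 2 := by
  set d := y - x
  have hline (t : ℝ) :
      HasDerivAt (fun s : ℝ => F (x + s • d)) ⟪gradient F (x + t • d), d⟫ t := by
    have := (hF (x + t • d)).hasFDerivAt.comp_hasDerivAt t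
      (((hasDerivAt_id t).smul_const d).const_add x)
    exact this.congr_deriv (by rw [one_smul, inner_gradient_left])
  let ψ : ℝ → ℝ := fun t => F (x + t • d) - t * ⟪gradient F x, d⟫ - L / 2 * t ^ 2 * ‖d‖ ^ 2
  have hψ (t : ℝ) : HasDerivAt ψ
      (⟪gradient F (x + t • d), d⟫ - ⟪gradient F x, d⟫ - L * t * ‖d‖ ^ 2) t := by
    have := ((hline t).sub ((hasDerivAt_id t).mul_const ⟪gradient F x, d⟫)).sub
      (((hasDerivAt_pow 2 t).const_mul (L / 2)).mul_const (‖d‖ ^ 2))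
    exact this.congr_deriv (by ring)
  obtain ⟨c, hc, hslope⟩ := exists_hasDerivAt_eq_slope ψ _ zero_lt_one
    (fun t _ => (hψ t).continuousAt.continuousWithinAt) (fun t _ => hψ t)
  have hgap : ⟪gradient F (x + c • d) - gradient F x, d⟫ ≤ L * c * ‖d‖ ^ 2 :=
    calc ⟪gradient F (x + c • d) - gradient F x, d⟫
        ≤ ‖gradient F (x + c • d) - gradient F x‖ * ‖d‖ := real_inner_le_norm _ _
      _ ≤ L * ‖(x + c • d) - x‖ * ‖d‖ := by gcongr; exact hL _ _
      _ = L * c * ‖d‖ ^ 2 := by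
        rw [add_sub_cancel_left, norm_smul, Real.norm_of_nonneg hc.1.le]; ring
  have h01 : ψ 1 ≤ ψ 0 := by
    rw [inner_sub_left] at hgap
    simp only [sub_zero, div_one] at hslope
    linarith
  simp only [ψ, d, zero_smul, add_zero, one_smul, add_sub_cancel] at h01
  linarith

theorem mul_add_sq_le_of_diagonal_step {L η cl cu a g m : ℝ} (hL : 0 ≤ L) (hη : 0 ≤ η)
    (hcl : 0 ≤ cl) (hla : cl ≤ a) (hau : a ≤ cu) (hstep : η * (2 * cu ^ 2 * L) ≤ cl) :
    g * -(η * a * m) + L / 2 * (η * a * m) ^ 2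
      ≤ η * cu / 2 * (g - m) ^ 2 - η * cl / 2 * g ^ 2 - η * cl / 4 * m ^ 2 := by
  have ha : 0 ≤ a := hcl.trans hla
  have hpolar : g * -(η * a * m) = η * a / 2 * ((g - m) ^ 2 - g ^ 2 - m ^ 2) := by ring
  have hgm : η * a / 2 * (g - m) ^ 2 ≤ η * cu / 2 * (g - m) ^ 2 := by gcongr
  have hg : η * cl / 2 * g ^ 2 ≤ η * a / 2 * g ^ 2 := by gcongr
  have hm : η * cl / 2 * m ^ 2 ≤ η * a / 2 * m ^ 2 := by gcongr
  have hquad : L / 2 * (η * a * m) ^ 2 ≤ η * cl / 4 * m ^ 2 :=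
    calc L / 2 * (η * a * m) ^ 2 = η / 4 * (η * (2 * a ^ 2 * L)) * m ^ 2 := by ring
      _ ≤ η / 4 * (η * (2 * cu ^ 2 * L)) * m ^ 2 := by gcongr
      _ ≤ η / 4 * cl * m ^ 2 := by gcongr
      _ = η * cl / 4 * m ^ 2 := by ring
  linarith

theorem inner_add_norm_sq_le_of_diagonal_step {ι : Type*} [Fintype ι] {L η cl cu : ℝ}
    (a : ι → ℝ) {g m d : EuclideanSpace ℝ ι} (hL : 0 ≤ L) (hη : 0 ≤ η) (hcl : 0 ≤ cl)
    (ha : ∀ j, cl ≤ a j ∧ a j ≤ cu) (hstep : η * (2 * cu ^ 2 * L) ≤ cl)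
    (hd : ∀ j, d j = -(η * a j * m j)) :
    ⟪g, d⟫ + L / 2 * ‖d‖ ^ 2
      ≤ η * cu / 2 * ‖g - m‖ ^ 2 - η * cl / 2 * ‖g‖ ^ 2 - η * cl / 4 * ‖m‖ ^ 2 := by
  simp only [EuclideanSpace.norm_sq_eq, PiLp.inner_apply, PiLp.sub_apply, Real.norm_eq_abs,
    sq_abs, Finset.mul_sum, ← Finset.sum_add_distrib, ← Finset.sum_sub_distrib]
  refine Finset.sum_le_sum fun j _ => ?_
  rw [hd, real_inner_comm, RCLike.inner_apply, conj_trivial, neg_sq]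
  exact mul_add_sq_le_of_diagonal_step hL hη hcl (ha j).1 (ha j).2 hstep

theorem adam_style_descent_lemma_general (D : ℕ) (F : EuclideanSpace ℝ (Fin D) → ℝ)
    (L_F c_l c_u η ε₀ : ℝ) (hLF : 0 < L_F)
    (hcl : 0 < c_l) (hcu : 0 < c_u)
    (hdiff : Differentiable ℝ F)
    (hsmooth : ∀ x y, ‖gradient F x - gradient F y‖ ≤ L_F * ‖x - y‖)
    (m v w w' : EuclideanSpace ℝ (Fin D))
    (hbox : ∀ j, c_l ≤ 1 / (Real.sqrt (v j) + ε₀) ∧ 1 / (Real.sqrt (v j) + ε₀) ≤ c_u)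
    (hupd : ∀ j, w' j = w j - η * (m j / (Real.sqrt (v j) + ε₀)))
    (hη0 : 0 < η) (hη : η ≤ c_l / (2 * c_u ^ 2 * L_F)) :
    F w' ≤ F w + (η * c_u / 2) * ‖gradient F w - m‖ ^ 2
      - (η * c_l / 2) * ‖gradient F w‖ ^ 2 - (η * c_l / 4) * ‖m‖ ^ 2 := by
  have hstep : η * (2 * c_u ^ 2 * L_F) ≤ c_l := (le_div_iff₀ (by positivity)).mp hη
  have hd (j : Fin D) : (w' - w) j = -(η * (1 / (Real.sqrt (v j) + ε₀)) * m j) := by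
    rw [PiLp.sub_apply, hupd]; ring
  have hmodel := inner_add_norm_sq_le_of_diagonal_step (g := gradient F w) _
    hLF.le hη0.le hcl.le hbox hstep hd
  linarith [le_add_inner_gradient_add_norm_sq hdiff hsmooth w w']

/-- Descent lemma for the Adam-style update `w' = w - η m / (√v + ε₀)` (componentwise):
if `F` is `L_F`-smooth and bounded below, the preconditioner satisfies
`c_l ≤ 1/(√(v_j) + ε₀) ≤ c_u` in every coordinate, and `η ≤ c_l / (2 c_u² L_F)`, then
`F w' ≤ F w + (η c_u/2)‖∇F(w) - m‖² - (η c_l/2)‖∇F(w)‖² - (η c_l/4)‖m‖²`. -/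
theorem adam_style_descent_lemma (D : ℕ) (F : EuclideanSpace ℝ (Fin D) → ℝ)
    (L_F c_l c_u η ε₀ : ℝ) (hLF : 0 < L_F) (hε₀ : 0 < ε₀)
    (hcl : 0 < c_l) (hcu : 0 < c_u)
    (hdiff : Differentiable ℝ F)
    (hsmooth : ∀ x y, ‖gradient F x - gradient F y‖ ≤ L_F * ‖x - y‖)
    (hbdd : ∃ B, ∀ x, B ≤ F x)
    (m v w w' : EuclideanSpace ℝ (Fin D))
    (hbox : ∀ j, c_l ≤ 1 / (Real.sqrt (v j) + ε₀) ∧ 1 / (Real.sqrt (v j) + ε₀) ≤ c_u)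
    (hupd : ∀ j, w' j = w j - η * (m j / (Real.sqrt (v j) + ε₀)))
    (hη0 : 0 < η) (hη : η ≤ c_l / (2 * c_u ^ 2 * L_F)) :
    F w' ≤ F w + (η * c_u / 2) * ‖gradient F w - m‖ ^ 2
      - (η * c_l / 2) * ‖gradient F w‖ ^ 2 - (η * c_l / 4) * ‖m‖ ^ 2 :=
  adam_style_descent_lemma_general D F L_F c_l c_u η ε₀ hLF hcl hcu hdiff hsmooth m v w w' hbox hupd
    hη0 hη
end

section
/- Suppose σ: R^d → R^d is C_σ-Lipschitz, the aggregator A is C_A-Lipschitz in the sense that ‖A(S₁) − A(S₂)‖ ≤ C_A · Σ_{u ∈ O} ‖h_u − h'_u‖ whenever the two input multisets S₁, S₂ differ only on the index set O, and ‖W‖ ≤ C_k (operator norm). Let h_v = σ(W · A({h_u : u ∈ S} ∪ {h̃_u : u ∈ O})) be the pseudo-full-neighborhood embedding using stale embeddings h̃_u = h_u^{old} for out-of-batch nodes u ∈ O, and let h̄_v = σ(W · A({h_u : u ∈ N̄_v})) be the full-neighborhood embedding. Then ‖h_v − h̄_v‖ ≤ C_σ C_k C_A · Σ_{u ∈ O}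 ‖h_u^{old} − h_u‖. -/
/-!
The error passes through the three layers one at a time: `σ` multiplies it by at most `C_σ`,
`W` by at most `‖W‖ ≤ C_k`, and the aggregator, whose two inputs differ only on the out-of-batch
nodes `O`, contributes `C_A ∑_{u ∈ O} ‖h_u^{old} - h_u‖`.
-/

def AggregatorLipschitz {ι E F : Type*} [SeminormedAddCommGroup E] [SeminormedAddCommGroup F]
    (CA : ℝ) (A : (ι → E) → F) : Prop :=
  ∀ (h h' : ι → E) (O : Finset ι), (∀ u ∉ O, h u = h' u) → ‖A h - A h'‖ ≤ CA * ∑ u ∈ O, ‖h u - h' u‖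

theorem AggregatorLipschitz.norm_sub_piecewise_le {ι E F : Type*} [DecidableEq ι]
    [SeminormedAddCommGroup E] [SeminormedAddCommGroup F] {CA : ℝ} {A : (ι → E) → F}
    (hA : AggregatorLipschitz CA A) (O : Finset ι) (g h : ι → E) :
    ‖A (O.piecewise g h) - A h‖ ≤ CA * ∑ u ∈ O, ‖g u - h u‖ := by
  have hsum : ∑ u ∈ O, ‖O.piecewise g h u - h u‖ = ∑ u ∈ O, ‖g u - h u‖ :=
    Finset.sum_congr rfl fun u hu => by rw [O.piecewise_eq_of_mem g h hu]
  simpa only [hsum] using hA _ h O fun u hu => O.piecewise_eq_of_notMem g h hu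

theorem norm_sub_comp_clm_le {𝕜 E F G : Type*} [NontriviallyNormedField 𝕜]
    [SeminormedAddCommGroup E] [SeminormedAddCommGroup F] [SeminormedAddCommGroup G]
    [NormedSpace 𝕜 E] [NormedSpace 𝕜 F] {Cσ Ck : ℝ} {σ : F → G}
    (hσ : ∀ x y, ‖σ x - σ y‖ ≤ Cσ * ‖x - y‖) (hCσ : 0 ≤ Cσ) {W : E →L[𝕜] F} (hW : ‖W‖ ≤ Ck)
    (x y : E) : ‖σ (W x) - σ (W y)‖ ≤ Cσ * Ck * ‖x - y‖ :=
  calc ‖σ (W x) - σ (W y)‖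
      ≤ Cσ * ‖W (x - y)‖ := by simpa only [map_sub] using hσ (W x) (W y)
    _ ≤ Cσ * (Ck * ‖x - y‖) := by gcongr; exact W.le_of_opNorm_le hW _
    _ = Cσ * Ck * ‖x - y‖ := (mul_assoc _ _ _).symm

theorem gnnautoscale_staleness_bound_general (d : ℕ) (ι : Type*) [DecidableEq ι]
    (Cσ CA Ck : ℝ) (hCσ : 0 ≤ Cσ)
    (σ : EuclideanSpace ℝ (Fin d) → EuclideanSpace ℝ (Fin d))
    (hσ : ∀ x y, ‖σ x - σ y‖ ≤ Cσ * ‖x - y‖)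
    (W : EuclideanSpace ℝ (Fin d) →L[ℝ] EuclideanSpace ℝ (Fin d)) (hW : ‖W‖ ≤ Ck)
    (A : (ι → EuclideanSpace ℝ (Fin d)) → EuclideanSpace ℝ (Fin d))
    (hA : ∀ (h h' : ι → EuclideanSpace ℝ (Fin d)) (O : Finset ι),
      (∀ u ∉ O, h u = h' u) → ‖A h - A h'‖ ≤ CA * ∑ u ∈ O, ‖h u - h' u‖)
    (O : Finset ι) (h hold hstale : ι → EuclideanSpace ℝ (Fin d))
    (hst : ∀ u, hstale u = if u ∈ O then hold u else h u) :
    ‖σ (W (A hstale)) - σ (W (A h))‖ ≤ Cσ * Ck * CA * ∑ u ∈ O, ‖hold u - h u‖ := by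
  have hstale_eq : hstale = O.piecewise hold h := funext hst
  have hCk : 0 ≤ Ck := (norm_nonneg W).trans hW
  calc ‖σ (W (A hstale)) - σ (W (A h))‖
      ≤ Cσ * Ck * ‖A hstale - A h‖ := norm_sub_comp_clm_le hσ hCσ hW _ _
    _ ≤ Cσ * Ck * (CA * ∑ u ∈ O, ‖hold u - h u‖) := by
        gcongr
        rw [hstale_eq]
        exact AggregatorLipschitz.norm_sub_piecewise_le hA O hold h
    _ = Cσ * Ck * CA * ∑ u ∈ O, ‖hold u - h u‖ := (mul_assoc _ _ _).symm

/-- GNNAutoScale staleness bound: the pseudo-full-neighborhood embedding built from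
current in-batch embeddings and stale historical embeddings of out-of-batch nodes
differs from the full-neighborhood embedding by at most
`C_σ C_k C_A ∑_{u ∈ O} ‖h_u^{old} - h_u‖`. -/
theorem gnnautoscale_staleness_bound (d : ℕ) (ι : Type*) [Fintype ι] [DecidableEq ι]
    (Cσ CA Ck : ℝ) (hCσ : 0 ≤ Cσ) (hCk : 0 ≤ Ck)
    (σ : EuclideanSpace ℝ (Fin d) → EuclideanSpace ℝ (Fin d))
    (hσ : ∀ x y, ‖σ x - σ y‖ ≤ Cσ * ‖x - y‖)
    (W : EuclideanSpace ℝ (Fin d) →L[ℝ] EuclideanSpace ℝ (Fin d)) (hW : ‖W‖ ≤ Ck)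
    (A : (ι → EuclideanSpace ℝ (Fin d)) → EuclideanSpace ℝ (Fin d))
    (hA : ∀ (h h' : ι → EuclideanSpace ℝ (Fin d)) (O : Finset ι),
      (∀ u ∉ O, h u = h' u) → ‖A h - A h'‖ ≤ CA * ∑ u ∈ O, ‖h u - h' u‖)
    (O : Finset ι) (h hold hstale : ι → EuclideanSpace ℝ (Fin d))
    (hst : ∀ u, hstale u = if u ∈ O then hold u else h u) :
    ‖σ (W (A hstale)) - σ (W (A h))‖ ≤ Cσ * Ck * CA * ∑ u ∈ O, ‖hold u - h u‖ :=
  gnnautoscale_staleness_bound_general d ι Cσ CA Ck hCσ σ hσ W hW A hA O h hold hstale hst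
end

section
/- Let F(w) = f_{K+1} ∘ ... ∘ f_1(w) with each f_k being L_f-Lipschitz with L_g-Lipschitz Jacobian, and ∇F(w) = ∇f_1(w)·∇f_2(y_1)···∇f_{K+1}(y_K) where y_k = f_k ∘ ... ∘ f_1(w). For arbitrary points u_0 = w, u_1, ..., u_K, the gradient estimation error satisfies ‖∇F(w) − ∏_{k=1}^{K+1} ∇f_k(u_{k−1})‖ ≤ L_f^K L_g · Σ_{k=1}^K ‖y_k − u_k‖, and consequently ‖∇F(w) − ∏_{k=1}^{K+1} ∇f_k(u_{k−1})‖² ≤ K · Σ_{k=1}^K C_k² ‖f_k(u_{k−1}) − u_k‖² where C_k = L_f^K L_g (1 + L_f + ... + L_f^{K−k}). -/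
/-!
With `A_k = ∇f_k(y_k)`, `B_k = ∇f_k(u_k)` and `P_k`, `Q_k` the products of the first `k` of the
`A`'s, resp. `B`'s, `P_{k+1} - Q_{k+1} = A_k (P_k - Q_k) + (A_k - B_k) Q_k`. Unrolling this, with
`‖A_k‖ ≤ L_f`, `‖Q_k‖ ≤ L_f^k` and `‖A_k - B_k‖ ≤ L_g ‖y_k - u_k‖`, every term carries the same
factor `L_f^K`, which gives the first bound. The same unrolling for the points themselves gives
`‖y_{k+1} - u_{k+1}‖ ≤ ∑_{j ≤ k} L_f^{k-j} ‖f_j(u_j) - u_{j+1}‖`; exchanging the order of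
summation and applying Cauchy–Schwarz gives the second.
-/

open Finset ContinuousLinearMap

section CompChain

variable {𝕜 : Type*} [NontriviallyNormedField 𝕜]
  {E F G : Type*} [SeminormedAddCommGroup E] [NormedSpace 𝕜 E]
  [SeminormedAddCommGroup F] [NormedSpace 𝕜 F] [SeminormedAddCommGroup G] [NormedSpace 𝕜 G]

theorem norm_comp_sub_comp_le (A B : F →L[𝕜] G) (P Q : E →L[𝕜] F) :
    ‖A.comp P - B.comp Q‖ ≤ ‖A‖ * ‖P - Q‖ + ‖A - B‖ * ‖Q‖ := by
  have hsplit : A.comp P - B.comp Q = A.comp (P - Q) + (A - B).comp Q := by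
    rw [comp_sub, sub_comp]
    abel
  rw [hsplit]
  exact (norm_add_le _ _).trans (add_le_add (opNorm_comp_le _ _) (opNorm_comp_le _ _))

variable {V : ℕ → Type*} [∀ k, SeminormedAddCommGroup (V k)] [∀ k, NormedSpace 𝕜 (V k)]
  {L : ℝ}

theorem norm_comp_chain_le_pow {B : ∀ k, V k →L[𝕜] V (k + 1)} {Q : ∀ k, E →L[𝕜] V k}
    (hQ : ∀ k, Q (k + 1) = (B k).comp (Q k)) (hQ0 : ‖Q 0‖ ≤ 1) (hB : ∀ k, ‖B k‖ ≤ L) (k : ℕ) :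
    ‖Q k‖ ≤ L ^ k := by
  induction k with
  | zero => simpa using hQ0
  | succ k ih =>
    rw [hQ k, pow_succ']
    exact (opNorm_comp_le _ _).trans
      (mul_le_mul (hB k) ih (norm_nonneg _) ((norm_nonneg _).trans (hB 0)))

theorem norm_sub_comp_chain_le {A B : ∀ k, V k →L[𝕜] V (k + 1)} {P Q : ∀ k, E →L[𝕜] V k}
    (hP : ∀ k, P (k + 1) = (A k).comp (P k)) (hQ : ∀ k, Q (k + 1) = (B k).comp (Q k))
    (h0 : P 0 = Q 0) (hQ0 : ‖Q 0‖ ≤ 1) (hA : ∀ k, ‖A k‖ ≤ L) (hB : ∀ k, ‖B k‖ ≤ L)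
    (n : ℕ) : ‖P (n + 1) - Q (n + 1)‖ ≤ L ^ n * ∑ k ∈ range (n + 1), ‖A k - B k‖ := by
  have hL : 0 ≤ L := (norm_nonneg _).trans (hA 0)
  have hQL := norm_comp_chain_le_pow hQ hQ0 hB
  induction n with
  | zero =>
    rw [hP, hQ, h0, ← sub_comp, pow_zero, one_mul, sum_range_one]
    exact (opNorm_comp_le _ _).trans (mul_le_of_le_one_right (norm_nonneg _) hQ0)
  | succ n ih =>
    rw [hP, hQ]
    calc ‖(A (n + 1)).comp (P (n + 1)) - (B (n + 1)).comp (Q (n + 1))‖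
        ≤ ‖A (n + 1)‖ * ‖P (n + 1) - Q (n + 1)‖ + ‖A (n + 1) - B (n + 1)‖ * ‖Q (n + 1)‖ :=
          norm_comp_sub_comp_le _ _ _ _
      _ ≤ L * (L ^ n * ∑ k ∈ range (n + 1), ‖A k - B k‖)
            + ‖A (n + 1) - B (n + 1)‖ * L ^ (n + 1) := by
          gcongr
          exacts [hA _, hQL _]
      _ = L ^ (n + 1) * ∑ k ∈ range (n + 1 + 1), ‖A k - B k‖ := by
          rw [sum_range_succ _ (n + 1)]
          ring

end CompChain

section IteratedComposition

variable {𝕜 E : Type*} [NontriviallyNormedField 𝕜] [NormedAddCommGroup E] [NormedSpace 𝕜 E]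
  {V : ℕ → Type*} [∀ k, NormedAddCommGroup (V k)] [∀ k, NormedSpace 𝕜 (V k)]
  {f : ∀ k, V k → V (k + 1)} {C : ∀ k, E → V k}

theorem differentiable_of_succ_eq_comp (hf : ∀ k, Differentiable 𝕜 (f k))
    (hC0 : Differentiable 𝕜 (C 0)) (hC : ∀ k x, C (k + 1) x = f k (C k x)) (k : ℕ) :
    Differentiable 𝕜 (C k) := by
  induction k with
  | zero => exact hC0
  | succ k ih =>
    rw [funext (hC k)]
    exact (hf k).comp ih

theorem fderiv_succ_of_succ_eq_comp (hf : ∀ k, Differentiable 𝕜 (f k))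
    (hC0 : Differentiable 𝕜 (C 0)) (hC : ∀ k x, C (k + 1) x = f k (C k x)) (k : ℕ) (x : E) :
    fderiv 𝕜 (C (k + 1)) x = (fderiv 𝕜 (f k) (C k x)).comp (fderiv 𝕜 (C k) x) := by
  rw [funext (hC k)]
  exact fderiv_comp x (hf k _) (differentiable_of_succ_eq_comp hf hC0 hC k x)

end IteratedComposition

section Orbit

variable {V : ℕ → Type*} [∀ k, SeminormedAddCommGroup (V k)] {f : ∀ k, V k → V (k + 1)}
  {L : ℝ}

theorem norm_orbit_sub_le_sum (hL : 0 ≤ L) (hf : ∀ k (a b : V k), ‖f k a - f k b‖ ≤ L * ‖a - b‖)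
    {y u : ∀ k, V k} (hy : ∀ k, y (k + 1) = f k (y k)) (h0 : y 0 = u 0) (k : ℕ) :
    ‖y (k + 1) - u (k + 1)‖ ≤ ∑ j ∈ range (k + 1), L ^ (k - j) * ‖f j (u j) - u (j + 1)‖ := by
  induction k with
  | zero => simp [hy, h0]
  | succ k ih =>
    have hsplit : y (k + 2) - u (k + 2) = (f (k + 1) (y (k + 1)) - f (k + 1) (u (k + 1)))
        + (f (k + 1) (u (k + 1)) - u (k + 2)) := by
      rw [hy]
      abel
    calc ‖y (k + 2) - u (k + 2)‖
        ≤ L * ‖y (k + 1) - u (k + 1)‖ + ‖f (k + 1) (u (k + 1)) - u (k + 2)‖ := by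
          rw [hsplit]
          exact (norm_add_le _ _).trans (add_le_add_left (hf _ _ _) _)
      _ ≤ L * ∑ j ∈ range (k + 1), L ^ (k - j) * ‖f j (u j) - u (j + 1)‖
            + ‖f (k + 1) (u (k + 1)) - u (k + 2)‖ := by gcongr
      _ = ∑ j ∈ range (k + 1 + 1), L ^ (k + 1 - j) * ‖f j (u j) - u (j + 1)‖ := by
          rw [sum_range_succ _ (k + 1), mul_sum, Nat.sub_self, pow_zero, one_mul]
          congr 1
          refine sum_congr rfl fun j hj => ?_
          rw [Nat.sub_add_comm (mem_range_succ_iff.mp hj), pow_succ']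
          ring

theorem sum_norm_orbit_sub_le (hL : 0 ≤ L) (hf : ∀ k (a b : V k), ‖f k a - f k b‖ ≤ L * ‖a - b‖)
    {y u : ∀ k, V k} (hy : ∀ k, y (k + 1) = f k (y k)) (h0 : y 0 = u 0) (K : ℕ) :
    ∑ k ∈ range K, ‖y (k + 1) - u (k + 1)‖ ≤
      ∑ j ∈ range K, (∑ i ∈ range (K - j), L ^ i) * ‖f j (u j) - u (j + 1)‖ := by
  calc ∑ k ∈ range K, ‖y (k + 1) - u (k + 1)‖
      ≤ ∑ k ∈ range K, ∑ j ∈ range (k + 1), L ^ (k - j) * ‖f j (u j) - u (j + 1)‖ :=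
        sum_le_sum fun k _ => norm_orbit_sub_le_sum hL hf hy h0 k
    _ = ∑ j ∈ range K, (∑ i ∈ range (K - j), L ^ i) * ‖f j (u j) - u (j + 1)‖ := by
        simp only [sum_mul]
        exact sum_range_diag_flip K fun j i => L ^ i * ‖f j (u j) - u (j + 1)‖

end Orbit

/-- Gradient estimation error for a nested composition: with `y_k = C k w` the exact
intermediate values and `u_0 = w, u_1, ..., u_K` arbitrary approximations, if each `f k`
is `L_f`-Lipschitz with `L_g`-Lipschitz Jacobian, then the product of Jacobians evaluated
at the approximate points satisfies
`‖∇F(w) - ∏ ∇f_k(u_{k-1})‖ ≤ L_f^K L_g ∑_{k=1}^K ‖y_k - u_k‖`, and consequently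
`‖∇F(w) - ∏ ∇f_k(u_{k-1})‖² ≤ K ∑_{k=1}^K C_k² ‖f_k(u_{k-1}) - u_k‖²` with
`C_k = L_f^K L_g (1 + L_f + ... + L_f^{K-k})`. -/
theorem gradient_product_estimation_error
    (V : ℕ → Type*) [∀ k, NormedAddCommGroup (V k)] [∀ k, NormedSpace ℝ (V k)]
    (K : ℕ) (L_f L_g : ℝ) (hLf : 0 ≤ L_f) (hLg : 0 ≤ L_g)
    (f : ∀ k, V k → V (k + 1))
    (hdiff : ∀ k, Differentiable ℝ (f k))
    (hlip : ∀ k (a b : V k), ‖f k a - f k b‖ ≤ L_f * ‖a - b‖)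
    (hjac : ∀ k (a b : V k), ‖fderiv ℝ (f k) a - fderiv ℝ (f k) b‖ ≤ L_g * ‖a - b‖)
    (C : ∀ k, V 0 → V k)
    (hC0 : ∀ w, C 0 w = w) (hCs : ∀ k w, C (k + 1) w = f k (C k w))
    (w : V 0) (u : ∀ k, V k) (hu0 : u 0 = w)
    (G : ∀ k, V 0 →L[ℝ] V k)
    (hG0 : G 0 = ContinuousLinearMap.id ℝ (V 0))
    (hGs : ∀ k, G (k + 1) = (fderiv ℝ (f k) (u k)).comp (G k)) :
    ‖fderiv ℝ (C (K + 1)) w - G (K + 1)‖ ≤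
        L_f ^ K * L_g * ∑ k ∈ Finset.Icc 1 K, ‖C k w - u k‖ ∧
      ‖fderiv ℝ (C (K + 1)) w - G (K + 1)‖ ^ 2 ≤
        (K : ℝ) * ∑ k ∈ Finset.range K,
          (L_f ^ K * L_g * ∑ j ∈ Finset.range (K - k), L_f ^ j) ^ 2 *
            ‖f k (u k) - u (k + 1)‖ ^ 2 := by
  have hCid : C 0 = id := funext hC0
  have hCdiff : Differentiable ℝ (C 0) := hCid ▸ differentiable_id
  have hfd : ∀ k x, ‖fderiv ℝ (f k) x‖ ≤ L_f := fun k x =>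
    norm_fderiv_le_of_lip' ℝ hLf (.of_forall fun y => hlip k y x)
  have hchain := norm_sub_comp_chain_le (P := fun k => fderiv ℝ (C k) w) (Q := G)
    (fderiv_succ_of_succ_eq_comp hdiff hCdiff hCs · w) hGs (by simp [hCid, hG0])
    (hG0 ▸ norm_id_le) (fun k => hfd k _) (fun k => hfd k _) K
  have hfirst : ‖fderiv ℝ (C (K + 1)) w - G (K + 1)‖ ≤
      L_f ^ K * L_g * ∑ k ∈ range K, ‖C (k + 1) w - u (k + 1)‖ := by
    calc _ ≤ L_f ^ K * ∑ k ∈ range (K + 1), L_g * ‖C k w - u k‖ :=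
          hchain.trans (by gcongr with k; exact hjac k _ _)
      _ = _ := by rw [sum_range_succ', hC0, hu0, sub_self, norm_zero, mul_zero, add_zero,
          ← mul_sum, mul_assoc]
  have hshift : ∑ k ∈ Icc 1 K, ‖C k w - u k‖ = ∑ k ∈ range K, ‖C (k + 1) w - u (k + 1)‖ := by
    rw [range_eq_Ico, sum_Ico_add' (fun k => ‖C k w - u k‖), zero_add, Ico_add_one_right_eq_Icc]
  refine ⟨hshift ▸ hfirst, ?_⟩
  set c := fun k => L_f ^ K * L_g * ∑ j ∈ range (K - k), L_f ^ j
  set d := fun k => ‖f k (u k) - u (k + 1)‖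
  have hweighted : ‖fderiv ℝ (C (K + 1)) w - G (K + 1)‖ ≤ ∑ k ∈ range K, c k * d k := by
    refine hfirst.trans ?_
    simp only [c, mul_assoc, ← mul_sum]
    gcongr L_f ^ K * (L_g * ?_)
    exact sum_norm_orbit_sub_le hLf hlip (y := (C · w)) (hCs · w) ((hC0 w).trans hu0.symm) K
  calc ‖fderiv ℝ (C (K + 1)) w - G (K + 1)‖ ^ 2
      ≤ (∑ k ∈ range K, c k * d k) ^ 2 := by gcongr
    _ ≤ (K : ℝ) * ∑ k ∈ range K, (c k * d k) ^ 2 := by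
        simpa using sq_sum_le_card_mul_sum_sq (s := range K) (f := fun k => c k * d k)
    _ = _ := by simp only [c, d, mul_pow]
end

section
/- In the GraphFM-IB feature-momentum update, if for each sampled node i the update is u_{k,i}^{t+1} = (1−β)u_{k,i}^t + β f̂_{k,i}(u_{k−1}^t) with E[f̂_{k,i}] = f_{k,i}(u_{k−1}^t), E[‖f̂_{k,i} − f_{k,i}‖²] ≤ σ_f², and exactly the nodes in a uniformly random batch B of size B are updated (others unchanged), then E[Σ_{i∈B}‖u_{k,i}^{t+1} − u_{k,i}^t‖²] ≤ β² B σ_f² + (β² B / n)·E[‖f_k(u_{k−1}^t) − u_k^t‖²]. -/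
/-!
Only the sampled nodes move, node `i` by `β (f̂_i - u_i)`. Since the batch is independent of the
evaluations, the expected drift factorises as `∑_i P(i ∈ 𝓑) β² E‖f̂_i - u_i‖²` with
`P(i ∈ 𝓑) = B/n`, and the bias–variance decomposition `E‖f̂_i - u_i‖² = E‖f̂_i - f_i‖² + ‖f_i - u_i‖²`
bounds each second moment by `σ_f² + ‖f_i - u_i‖²`.
-/

open MeasureTheory

theorem integral_norm_sub_sq_eq_add {Ω E : Type*} [MeasurableSpace Ω] {μ : Measure Ω}
    [IsProbabilityMeasure μ] [NormedAddCommGroup E] [InnerProductSpace ℝ E] [CompleteSpace E]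
    {g : Ω → E} (hg : MemLp g 2 μ) (b : E) :
    ∫ ω, ‖g ω - b‖ ^ 2 ∂μ
      = ∫ ω, ‖g ω - ∫ x, g x ∂μ‖ ^ 2 ∂μ + ‖(∫ x, g x ∂μ) - b‖ ^ 2 := by
  set a := ∫ x, g x ∂μ
  have hcentered : MemLp (fun ω => g ω - a) 2 μ := hg.sub (memLp_const a)
  have hcentered_int : Integrable (fun ω => g ω - a) μ := hcentered.integrable one_le_two
  have hmean : ∫ ω, (g ω - a) ∂μ = 0 := by
    rw [integral_sub (hg.integrable one_le_two) (integrable_const a)]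
    simp [a]
  have hexpand : ∀ ω, ‖g ω - b‖ ^ 2
      = ‖g ω - a‖ ^ 2 + 2 * inner ℝ (a - b) (g ω - a) + ‖a - b‖ ^ 2 := fun ω => by
    rw [real_inner_comm, ← norm_add_sq_real, sub_add_sub_cancel]
  have hvariance : Integrable (fun ω => ‖g ω - a‖ ^ 2) μ :=
    (memLp_two_iff_integrable_sq_norm hcentered.1).1 hcentered
  have hcross : Integrable (fun ω => 2 * inner ℝ (a - b) (g ω - a)) μ :=
    (hcentered_int.const_inner (a - b)).const_mul 2
  simp_rw [hexpand]
  rw [integral_add _ (integrable_const _), integral_add hvariance hcross, integral_const_mul,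
    integral_inner hcentered_int, hmean]
  · simp
  · exact hvariance.add hcross

theorem norm_smul_add_smul_sub_sq {E : Type*} [SeminormedAddCommGroup E] [NormedSpace ℝ E]
    (β : ℝ) (u v : E) : ‖((1 - β) • u + β • v) - u‖ ^ 2 = β ^ 2 * ‖v - u‖ ^ 2 := by
  rw [show ((1 - β) • u + β • v) - u = β • (v - u) by module, norm_smul, mul_pow,
    Real.norm_eq_abs, sq_abs]

theorem integral_prod_sum_randomFinset {ι Ω₁ Ω₂ : Type*} [Fintype ι]
    [MeasurableSpace Ω₁] [MeasurableSpace Ω₂] {μ₁ : Measure Ω₁} {μ₂ : Measure Ω₂}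
    [IsFiniteMeasure μ₁] [SFinite μ₂]
    (𝓑 : Ω₁ → Finset ι) (h𝓑 : ∀ i, MeasurableSet {ω | i ∈ 𝓑 ω})
    {g : ι → Ω₂ → ℝ} (hg : ∀ i, Integrable (g i) μ₂) :
    ∫ p, ∑ i ∈ 𝓑 p.1, g i p.2 ∂(μ₁.prod μ₂)
      = ∑ i, μ₁.real {ω | i ∈ 𝓑 ω} * ∫ ω, g i ω ∂μ₂ := by
  have hindicator : ∀ p : Ω₁ × Ω₂,
      ∑ i ∈ 𝓑 p.1, g i p.2 = ∑ i, {ω | i ∈ 𝓑 ω}.indicator 1 p.1 * g i p.2 := fun p => by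
    classical
    simp only [Set.indicator_apply, Set.mem_ofPred_eq, Pi.one_apply, ite_mul, one_mul, zero_mul]
    rw [Finset.sum_ite_mem, Finset.univ_inter]
  have hterm : ∀ i, Integrable (fun p : Ω₁ × Ω₂ => {ω | i ∈ 𝓑 ω}.indicator 1 p.1 * g i p.2)
      (μ₁.prod μ₂) := fun i =>
    ((integrable_const (1 : ℝ)).indicator (h𝓑 i)).mul_prod (hg i)
  simp_rw [hindicator]
  rw [integral_finsetSum _ fun i _ => hterm i]
  refine Finset.sum_congr rfl fun i _ => ?_
  rw [integral_prod_mul, integral_indicator_one (h𝓑 i)]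

theorem natCast_mul_div_natCast_le (n B : ℕ) : (n : ℝ) * (B / n) ≤ B := by
  rcases n.eq_zero_or_pos with rfl | hn
  · simp
  · rw [mul_div_cancel₀ _ (by positivity)]

theorem graphfm_ib_batch_drift_general
    {Ω₁ Ω₂ : Type*} [MeasurableSpace Ω₁] [MeasurableSpace Ω₂]
    (μ₁ : Measure Ω₁) (μ₂ : Measure Ω₂)
    [IsProbabilityMeasure μ₁] [IsProbabilityMeasure μ₂]
    (n B d : ℕ) (β σf : ℝ)
    (u f : Fin n → EuclideanSpace ℝ (Fin d))
    (fhat : Fin n → Ω₂ → EuclideanSpace ℝ (Fin d))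
    (𝓑 : Ω₁ → Finset (Fin n))
    (hmeas : ∀ i : Fin n, MeasurableSet {ω | i ∈ 𝓑 ω})
    (hprob : ∀ i : Fin n, (μ₁ {ω | i ∈ 𝓑 ω}).toReal = B / n)
    (hfhat_meas : ∀ i, AEStronglyMeasurable (fhat i) μ₂)
    (hunbiased : ∀ i, ∫ ω, fhat i ω ∂μ₂ = f i)
    (hvar : ∀ i, ∫ ω, ‖fhat i ω - f i‖ ^ 2 ∂μ₂ ≤ σf ^ 2)
    (hint : ∀ i, Integrable (fun ω => ‖fhat i ω - u i‖ ^ 2) μ₂) :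
    ∫ p, (∑ i ∈ 𝓑 p.1, ‖((1 - β) • u i + β • fhat i p.2) - u i‖ ^ 2) ∂(μ₁.prod μ₂)
      ≤ β ^ 2 * B * σf ^ 2 + (β ^ 2 * B / n) * ∑ i, ‖f i - u i‖ ^ 2 := by
  have hfhat_sq : ∀ i, MemLp (fhat i) 2 μ₂ := fun i => by
    have := (memLp_two_iff_integrable_sq_norm ((hfhat_meas i).sub aestronglyMeasurable_const)).2
      (hint i)
    simpa using this.add (memLp_const (u i))
  have hsecond_moment : ∀ i, ∫ ω, ‖fhat i ω - u i‖ ^ 2 ∂μ₂ ≤ σf ^ 2 + ‖f i - u i‖ ^ 2 :=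
    fun i => by
      rw [integral_norm_sub_sq_eq_add (hfhat_sq i), hunbiased i]
      gcongr
      exact hvar i
  calc ∫ p, (∑ i ∈ 𝓑 p.1, ‖((1 - β) • u i + β • fhat i p.2) - u i‖ ^ 2) ∂(μ₁.prod μ₂)
      = ∑ i, (B / n : ℝ) * ∫ ω, β ^ 2 * ‖fhat i ω - u i‖ ^ 2 ∂μ₂ := by
        simp_rw [norm_smul_add_smul_sub_sq]
        rw [integral_prod_sum_randomFinset 𝓑 hmeas fun i => (hint i).const_mul _]
        simp_rw [measureReal_def, hprob]
    _ ≤ ∑ i, (B / n : ℝ) * (β ^ 2 * (σf ^ 2 + ‖f i - u i‖ ^ 2)) := by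
        gcongr with i
        rw [integral_const_mul]
        gcongr
        exact hsecond_moment i
    _ = n * (B / n) * (β ^ 2 * σf ^ 2) + (β ^ 2 * B / n) * ∑ i, ‖f i - u i‖ ^ 2 := by
        simp only [mul_add, Finset.sum_add_distrib, Finset.sum_const, Finset.card_univ,
          Fintype.card_fin, nsmul_eq_mul, ← Finset.mul_sum]
        ring
    _ ≤ β ^ 2 * B * σf ^ 2 + (β ^ 2 * B / n) * ∑ i, ‖f i - u i‖ ^ 2 := by
        have := mul_le_mul_of_nonneg_right (natCast_mul_div_natCast_le n B)
          (by positivity : 0 ≤ β ^ 2 * σf ^ 2)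
        linarith

/-- Expected squared drift of the GraphFM-IB feature-momentum update: if exactly the
nodes in a random batch `𝓑` (independent of the stochastic evaluations, each node
included with probability `B/n`) are updated by
`u_i⁺ = (1-β) u_i + β f̂_i` with `E[f̂_i] = f_i` and `E‖f̂_i - f_i‖² ≤ σ_f²`, then
`E ∑_{i ∈ 𝓑} ‖u_i⁺ - u_i‖² ≤ β² B σ_f² + (β² B / n) ∑_i ‖f_i - u_i‖²`.
Independence is modeled by taking the batch and the evaluations on a product space. -/
theorem graphfm_ib_batch_drift
    {Ω₁ Ω₂ : Type*} [MeasurableSpace Ω₁] [MeasurableSpace Ω₂]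
    (μ₁ : Measure Ω₁) (μ₂ : Measure Ω₂)
    [IsProbabilityMeasure μ₁] [IsProbabilityMeasure μ₂]
    (n B d : ℕ) (β σf : ℝ) (hβ0 : 0 < β) (hβ1 : β ≤ 1) (hσf : 0 ≤ σf)
    (hB0 : 0 < B) (hBn : B ≤ n)
    (u f : Fin n → EuclideanSpace ℝ (Fin d))
    (fhat : Fin n → Ω₂ → EuclideanSpace ℝ (Fin d))
    (𝓑 : Ω₁ → Finset (Fin n))
    (hcard : ∀ ω, (𝓑 ω).card = B)
    (hmeas : ∀ i : Fin n, MeasurableSet {ω | i ∈ 𝓑 ω})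
    (hprob : ∀ i : Fin n, (μ₁ {ω | i ∈ 𝓑 ω}).toReal = B / n)
    (hfhat_meas : ∀ i, AEStronglyMeasurable (fhat i) μ₂)
    (hunbiased : ∀ i, ∫ ω, fhat i ω ∂μ₂ = f i)
    (hvar : ∀ i, ∫ ω, ‖fhat i ω - f i‖ ^ 2 ∂μ₂ ≤ σf ^ 2)
    (hint : ∀ i, Integrable (fun ω => ‖fhat i ω - u i‖ ^ 2) μ₂) :
    ∫ p, (∑ i ∈ 𝓑 p.1, ‖((1 - β) • u i + β • fhat i p.2) - u i‖ ^ 2) ∂(μ₁.prod μ₂)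
      ≤ β ^ 2 * B * σf ^ 2 + (β ^ 2 * B / n) * ∑ i, ‖f i - u i‖ ^ 2 :=
  graphfm_ib_batch_drift_general μ₁ μ₂ n B d β σf u f fhat 𝓑 hmeas hprob hfhat_meas hunbiased hvar
    hint
end
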